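/- Suppose (π²ε² + 1)α ≥ 1. Then, for any continuous 1-periodic substrate ψ, every global minimizer of the energy E over admissible curves is a graph curve (i.e., satisfies x'(t) > 0 for all t). -/

import Mathlib

/-!
A curve that is not a graph has a point where `x' ≤ 0`. Since it still advances by `1`
horizontally (so `x' > 0` somewhere), returns to its initial height (so `y' = 0` somewhere) and
closes up to its initial direction, its tangent angle turns by at least `π`. By Cauchy–Schwarz,
`π² ≤ (∫ κ² ds) · L`, hence `E ≥ ε²π²/L + αL` with `L ≥ 1`, and this exceeds `1` when
`(π²ε² + 1)α ≥ 1` and `α < 1`. A horizontal line above the substrate has energy exactly `1`.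
-/

open MeasureTheory Real Set

noncomputable section

/-- The (signed) curvature of a planar curve `γ` at parameter `t`. -/
def curvature (γ : ℝ → ℝ × ℝ) (t : ℝ) : ℝ :=
  ((deriv γ t).1 * (deriv (deriv γ) t).2 - (deriv γ t).2 * (deriv (deriv γ) t).1)
    / ‖deriv γ t‖ ^ 3

/-- Admissible curves above the substrate ψ: regular curves of Sobolev class H²
(modelled as C²) confined in the closed epigraph of ψ, satisfying the periodic
boundary conditions x(0)=0, x(1)=1, y(0)=y(1), γ'(0)=γ'(1). -/
def Admissible (ψ : ℝ → ℝ) (γ : ℝ → ℝ × ℝ) : Prop :=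
  ContDiff ℝ 2 γ ∧ (∀ t ∈ Icc (0:ℝ) 1, deriv γ t ≠ 0) ∧
  (∀ t ∈ Icc (0:ℝ) 1, ψ (γ t).1 ≤ (γ t).2) ∧
  (γ 0).1 = 0 ∧ (γ 1).1 = 1 ∧ (γ 0).2 = (γ 1).2 ∧ deriv γ 0 = deriv γ 1

/-- The contact potential: Θ = α on the graph of ψ, Θ = 1 off it. -/
def contactPotential (ψ : ℝ → ℝ) (α : ℝ) (p : ℝ × ℝ) : ℝ :=
  if p.2 = ψ p.1 then α else 1

/-- Total energy of one period: E[γ] = ∫ [ε²κ² + Θ(γ)] ds. -/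
def Energy (ψ : ℝ → ℝ) (α ε : ℝ) (γ : ℝ → ℝ × ℝ) : ℝ :=
  ∫ t in Icc (0:ℝ) 1, (ε ^ 2 * curvature γ t ^ 2 + contactPotential ψ α (γ t)) * ‖deriv γ t‖

/-- Length of one period of the curve. -/
def Length (γ : ℝ → ℝ × ℝ) : ℝ := ∫ t in Icc (0:ℝ) 1, ‖deriv γ t‖

/-- A curve is a graph curve if x'(t) > 0 for all t. -/
def IsGraph (γ : ℝ → ℝ × ℝ) : Prop := ∀ t ∈ Icc (0:ℝ) 1, 0 < (deriv γ t).1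

theorem one_lt_div_add_mul {c α L : ℝ} (hc : 0 ≤ c) (hα1 : α < 1) (hcond : 1 ≤ (c + 1) * α)
    (hL : 1 ≤ L) : 1 < c / L + α * L := by
  have hL0 : 0 < L := by linarith
  rw [← sub_pos, show c / L + α * L - 1 = (α * L ^ 2 - L + c) / L by field_simp; ring]
  refine div_pos ?_ hL0
  rcases le_or_gt (1 / 2) α with hα | hα
  · have hq1 : 0 < α + c - 1 := by nlinarith
    nlinarith [mul_nonneg (sub_nonneg.2 hL) (by nlinarith : 0 ≤ α * (L + 1) - 1)]
  · nlinarith [sq_nonneg (2 * α * L - 1)]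

theorem sq_integral_abs_mul_le {X : Type*} [MeasurableSpace X] {μ : Measure X} {k w : X → ℝ}
    (hw : ∀ x, 0 ≤ w x) (hwi : Integrable w μ) (hkwi : Integrable (fun x => |k x| * w x) μ)
    (hkkwi : Integrable (fun x => k x ^ 2 * w x) μ) :
    (∫ x, |k x| * w x ∂μ) ^ 2 ≤ (∫ x, k x ^ 2 * w x ∂μ) * ∫ x, w x ∂μ := by
  have hquad : ∀ y : ℝ, 0 ≤ (∫ x, w x ∂μ) * (y * y) + (-2 * ∫ x, |k x| * w x ∂μ) * y
      + ∫ x, k x ^ 2 * w x ∂μ := by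
    intro y
    have hexpand : ∫ x, (|k x| - y) ^ 2 * w x ∂μ = (∫ x, w x ∂μ) * (y * y)
        + (-2 * ∫ x, |k x| * w x ∂μ) * y + ∫ x, k x ^ 2 * w x ∂μ := by
      have hpt : (fun x => (|k x| - y) ^ 2 * w x)
          = fun x => (y * y) * w x + (-2 * y) * (|k x| * w x) + k x ^ 2 * w x := by
        ext x; rw [sub_sq, sq_abs]; ring
      rw [hpt, integral_add, integral_add, integral_const_mul, integral_const_mul]
      · ring
      exacts [hwi.const_mul _, hkwi.const_mul _, (hwi.const_mul _).add (hkwi.const_mul _), hkkwi]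
    rw [← hexpand]
    exact integral_nonneg fun x => mul_nonneg (sq_nonneg _) (hw x)
  have := discrim_le_zero hquad
  rw [discrim] at this
  linarith

theorem two_mul_abs_integral_le_integral_abs {ω : ℝ → ℝ} {a b c d : ℝ}
    (hω : IntervalIntegrable ω volume a b) (hc : c ∈ Icc a b) (hd : d ∈ Icc a b)
    (hzero : ∫ t in a..b, ω t = 0) :
    2 * |∫ t in c..d, ω t| ≤ ∫ t in a..b, |ω t| := by
  wlog hcd : c ≤ d generalizing c d
  · rw [intervalIntegral.integral_symm, abs_neg]
    exact this hd hc (le_of_not_ge hcd)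
  have hint : ∀ {x y}, x ∈ Icc a b → y ∈ Icc a b → IntervalIntegrable ω volume x y :=
    fun hx hy => hω.mono_set (uIcc_subset_uIcc (Icc_subset_uIcc hx) (Icc_subset_uIcc hy))
  have ha : a ∈ Icc a b := left_mem_Icc.2 (hc.1.trans hc.2)
  have hb : b ∈ Icc a b := right_mem_Icc.2 (hc.1.trans hc.2)
  have hsplit : ∀ f : ℝ → ℝ, IntervalIntegrable f volume a b → ∫ t in a..b, f t =
      (∫ t in a..c, f t) + (∫ t in c..d, f t) + ∫ t in d..b, f t := fun f hf => by
    have hint : ∀ {x y}, x ∈ Icc a b → y ∈ Icc a b → IntervalIntegrable f volume x y :=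
      fun hx hy => hf.mono_set (uIcc_subset_uIcc (Icc_subset_uIcc hx) (Icc_subset_uIcc hy))
    rw [intervalIntegral.integral_add_adjacent_intervals (hint ha hc) (hint hc hd),
      intervalIntegral.integral_add_adjacent_intervals (hint ha hd) (hint hd hb)]
  have hcomplement : ∫ t in c..d, ω t = -((∫ t in a..c, ω t) + ∫ t in d..b, ω t) := by
    linarith [hsplit ω hω]
  rw [hsplit _ hω.abs, two_mul]
  nth_rewrite 2 [hcomplement]
  rw [abs_neg]
  linarith [abs_add_le (∫ t in a..c, ω t) (∫ t in d..b, ω t),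
    intervalIntegral.abs_integral_le_integral_abs (f := ω) (μ := volume) hc.1,
    intervalIntegral.abs_integral_le_integral_abs (f := ω) (μ := volume) hcd,
    intervalIntegral.abs_integral_le_integral_abs (f := ω) (μ := volume) hd.2]

theorem pi_div_two_le_abs_sub_of_sin_eq_zero {x y : ℝ} (hy : sin y = 0) (h : cos x * cos y ≤ 0) :
    π / 2 ≤ |x - y| := by
  by_contra! hlt
  rw [abs_lt] at hlt
  have hpos : 0 < cos (x - y) := cos_pos_of_mem_Ioo ⟨by linarith, by linarith⟩
  have hcos : cos (x - y) = cos x * cos y := by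
    rw [cos_sub, hy, mul_zero, add_zero]
  linarith

theorem eq_cos_and_eq_sin_of_hasDerivAt {u v ω θ : ℝ → ℝ} {a b : ℝ}
    (hu : ∀ t ∈ Icc a b, HasDerivAt u (-(ω t * v t)) t)
    (hv : ∀ t ∈ Icc a b, HasDerivAt v (ω t * u t) t)
    (hθ : ∀ t ∈ Icc a b, HasDerivAt θ (ω t) t) (hua : u a = cos (θ a)) (hva : v a = sin (θ a)) :
    ∀ t ∈ Icc a b, u t = cos (θ t) ∧ v t = sin (θ t) := by
  set h : ℝ → ℝ := fun t => (u t - cos (θ t)) ^ 2 + (v t - sin (θ t)) ^ 2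
  have hderiv : ∀ t ∈ Icc a b, HasDerivAt h 0 t := by
    intro t ht
    have := (((hu t ht).fun_sub (hθ t ht).cos).fun_pow 2).fun_add
      (((hv t ht).fun_sub (hθ t ht).sin).fun_pow 2)
    exact this.congr_deriv (by ring)
  have hconst := constant_of_has_deriv_right_zero
    (fun t ht => (hderiv t ht).continuousAt.continuousWithinAt)
    (fun t ht => (hderiv t (Ico_subset_Icc_self ht)).hasDerivWithinAt)
  intro t ht
  have hzero : h t = 0 := by simp [hconst t ht, h, hua, hva]
  obtain ⟨hcos, hsin⟩ := (add_eq_zero_iff_of_nonneg (sq_nonneg _) (sq_nonneg _)).1 hzero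
  exact ⟨sub_eq_zero.1 (pow_eq_zero_iff two_ne_zero |>.1 hcos),
    sub_eq_zero.1 (pow_eq_zero_iff two_ne_zero |>.1 hsin)⟩

theorem pi_le_integral_abs_of_cos_sin {θ ω : ℝ → ℝ} {a b : ℝ}
    (hω : IntervalIntegrable ω volume a b)
    (hθ : ∀ c ∈ Icc a b, ∀ d ∈ Icc a b, ∫ t in c..d, ω t = θ d - θ c)
    (hcos : cos (θ b) = cos (θ a)) (hsin : sin (θ b) = sin (θ a))
    {t₀ t₁ t₂ : ℝ} (ht₀ : t₀ ∈ Icc a b) (ht₁ : t₁ ∈ Icc a b) (ht₂ : t₂ ∈ Icc a b)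
    (h₀ : cos (θ t₀) ≤ 0) (h₁ : 0 < cos (θ t₁)) (h₂ : sin (θ t₂) = 0) :
    π ≤ ∫ t in a..b, |ω t| := by
  have ha : a ∈ Icc a b := left_mem_Icc.2 (ht₀.1.trans ht₀.2)
  have hb : b ∈ Icc a b := right_mem_Icc.2 (ht₀.1.trans ht₀.2)
  obtain ⟨t, ht, hturn⟩ : ∃ t ∈ Icc a b, π / 2 ≤ |θ t - θ t₂| := by
    rcases le_or_gt 0 (cos (θ t₂)) with hc | hc
    · exact ⟨t₀, ht₀, pi_div_two_le_abs_sub_of_sin_eq_zero h₂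
        (mul_nonpos_of_nonpos_of_nonneg h₀ hc)⟩
    · exact ⟨t₁, ht₁, pi_div_two_le_abs_sub_of_sin_eq_zero h₂
        (mul_nonpos_of_nonneg_of_nonpos h₁.le hc.le)⟩
  obtain ⟨n, hn⟩ := Angle.angle_eq_iff_two_pi_dvd_sub.1 (Angle.cos_sin_inj hcos hsin)
  rcases eq_or_ne n 0 with rfl | hn0
  · have hclosed : ∫ t in a..b, ω t = 0 := by simpa [hθ a ha b hb] using hn
    have := two_mul_abs_integral_le_integral_abs hω ht₂ ht hclosed
    rw [hθ t₂ ht₂ t ht] at this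
    linarith
  · have hwind : 2 * π ≤ |∫ t in a..b, ω t| := by
      rw [hθ a ha b hb, hn, abs_mul, abs_of_pos two_pi_pos]
      exact le_mul_of_one_le_right two_pi_pos.le (by exact_mod_cast Int.one_le_abs hn0)
    linarith [pi_pos, intervalIntegral.abs_integral_le_integral_abs (f := ω) (μ := volume) hb.1]

theorem HasDerivAt.fst {f : ℝ → ℝ × ℝ} {f' : ℝ × ℝ} {t : ℝ} (hf : HasDerivAt f f' t) :
    HasDerivAt (fun s => (f s).1) f'.1 t :=
  hasDerivAt_iff_hasFDerivAt.2 hf.hasFDerivAt.fst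

theorem HasDerivAt.snd {f : ℝ → ℝ × ℝ} {f' : ℝ × ℝ} {t : ℝ} (hf : HasDerivAt f f' t) :
    HasDerivAt (fun s => (f s).2) f'.2 t :=
  hasDerivAt_iff_hasFDerivAt.2 hf.hasFDerivAt.snd

/-- `‖q‖` is the sup norm of `ℝ × ℝ` (also in `curvature` and `Energy`); angles need the
Euclidean norm. -/
def euclidNorm (q : ℝ × ℝ) : ℝ := √(q.1 ^ 2 + q.2 ^ 2)

theorem sq_euclidNorm (q : ℝ × ℝ) : euclidNorm q ^ 2 = q.1 ^ 2 + q.2 ^ 2 :=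
  sq_sqrt (by positivity)

theorem euclidNorm_pos {q : ℝ × ℝ} (hq : q ≠ 0) : 0 < euclidNorm q := by
  refine sqrt_pos.2 ?_
  rcases ne_or_eq q.1 0 with h | h
  · positivity
  · have : q.2 ≠ 0 := fun h' => hq (Prod.ext h h')
    positivity

theorem norm_le_euclidNorm (q : ℝ × ℝ) : ‖q‖ ≤ euclidNorm q :=
  max_le (abs_le_sqrt (le_add_of_nonneg_right (sq_nonneg _)))
    (abs_le_sqrt (le_add_of_nonneg_left (sq_nonneg _)))

theorem HasDerivAt.euclidNorm {p : ℝ → ℝ × ℝ} {p' : ℝ × ℝ} {t : ℝ} (hp : HasDerivAt p p' t)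
    (hne : p t ≠ 0) :
    HasDerivAt (fun s => euclidNorm (p s))
      (((p t).1 * p'.1 + (p t).2 * p'.2) / euclidNorm (p t)) t := by
  have := ((hp.fst.fun_pow 2).fun_add (hp.snd.fun_pow 2)).sqrt
    (by rw [← sq_euclidNorm]; exact (pow_pos (euclidNorm_pos hne) 2).ne')
  refine this.congr_deriv ?_
  simp only [_root_.euclidNorm]
  field_simp
  ring

def turningRate (p : ℝ → ℝ × ℝ) (t : ℝ) : ℝ :=
  ((p t).1 * (deriv p t).2 - (p t).2 * (deriv p t).1) / euclidNorm (p t) ^ 2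

theorem hasDerivAt_fst_div_euclidNorm {p : ℝ → ℝ × ℝ} {t : ℝ} (hp : DifferentiableAt ℝ p t)
    (hne : p t ≠ 0) :
    HasDerivAt (fun s => (p s).1 / euclidNorm (p s))
      (-(turningRate p t * ((p t).2 / euclidNorm (p t)))) t := by
  have hρ := (euclidNorm_pos hne).ne'
  refine (hp.hasDerivAt.fst.div (hp.hasDerivAt.euclidNorm hne) hρ).congr_deriv ?_
  have := sq_euclidNorm (p t)
  simp only [turningRate]
  field_simp
  linear_combination (deriv p t).1 * this

theorem hasDerivAt_snd_div_euclidNorm {p : ℝ → ℝ × ℝ} {t : ℝ} (hp : DifferentiableAt ℝ p t)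
    (hne : p t ≠ 0) :
    HasDerivAt (fun s => (p s).2 / euclidNorm (p s))
      (turningRate p t * ((p t).1 / euclidNorm (p t))) t := by
  have hρ := (euclidNorm_pos hne).ne'
  refine (hp.hasDerivAt.snd.div (hp.hasDerivAt.euclidNorm hne) hρ).congr_deriv ?_
  have := sq_euclidNorm (p t)
  simp only [turningRate]
  field_simp
  linear_combination (deriv p t).2 * this

theorem continuousOn_turningRate {p : ℝ → ℝ × ℝ} (hp : ContDiff ℝ 1 p) :
    ContinuousOn (turningRate p) {t | p t ≠ 0} := by
  have hp₀ := hp.continuous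
  have hp₁ := hp.continuous_deriv le_rfl
  refine ContinuousOn.div (by fun_prop) ?_ fun t ht => (pow_pos (euclidNorm_pos ht) 2).ne'
  simp only [_root_.euclidNorm]
  fun_prop

theorem intervalIntegrable_turningRate {p : ℝ → ℝ × ℝ} {a b : ℝ} (hp : ContDiff ℝ 1 p)
    (hne : ∀ t ∈ uIcc a b, p t ≠ 0) : IntervalIntegrable (turningRate p) volume a b :=
  ((continuousOn_turningRate hp).mono hne).intervalIntegrable

theorem exists_angle {p : ℝ → ℝ × ℝ} {a b : ℝ} (hp : ContDiff ℝ 1 p)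
    (hne : ∀ t ∈ Icc a b, p t ≠ 0) :
    ∃ θ : ℝ → ℝ, (∀ c ∈ Icc a b, ∀ d ∈ Icc a b, ∫ t in c..d, turningRate p t = θ d - θ c) ∧
      ∀ t ∈ Icc a b, (p t).1 = euclidNorm (p t) * cos (θ t) ∧
        (p t).2 = euclidNorm (p t) * sin (θ t) := by
  rcases lt_or_ge b a with hba | hab
  · exact ⟨0, by simp [Icc_eq_empty_of_lt hba]⟩
  have ha : a ∈ Icc a b := left_mem_Icc.2 hab
  have hint : ∀ c ∈ Icc a b, ∀ d ∈ Icc a b, IntervalIntegrable (turningRate p) volume c d :=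
    fun c hc d hd => intervalIntegrable_turningRate hp fun t ht => hne t (uIcc_subset_Icc hc hd ht)
  set z : ℂ := ⟨(p a).1, (p a).2⟩
  set θ : ℝ → ℝ := fun t => z.arg + ∫ τ in a..t, turningRate p τ
  have hprim : ∀ c ∈ Icc a b, ∀ d ∈ Icc a b, ∫ t in c..d, turningRate p t = θ d - θ c := by
    intro c hc d hd
    rw [← intervalIntegral.integral_interval_sub_left (hint a ha d hd) (hint a ha c hc)]
    ring
  have hU : IsOpen {t | p t ≠ 0} := isOpen_ne_fun hp.continuous continuous_const
  have hω := continuousOn_turningRate hp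
  have hθ : ∀ t ∈ Icc a b, HasDerivAt θ (turningRate p t) t := fun t ht =>
    (intervalIntegral.integral_hasDerivAt_right (hint a ha t ht)
      (hω.stronglyMeasurableAtFilter hU t (hne t ht))
      (hω.continuousAt (hU.mem_nhds (hne t ht)))).const_add _
  have hz : z ≠ 0 := fun h => hne a ha (Prod.ext (congrArg Complex.re h) (congrArg Complex.im h))
  have hnz : ‖z‖ = euclidNorm (p a) := Complex.norm_eq_sqrt_sq_add_sq z
  have hdiff := hp.differentiable one_ne_zero
  have hunit := eq_cos_and_eq_sin_of_hasDerivAt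
    (fun t ht => hasDerivAt_fst_div_euclidNorm (hdiff t) (hne t ht))
    (fun t ht => hasDerivAt_snd_div_euclidNorm (hdiff t) (hne t ht)) hθ
    (by simp [θ, Complex.cos_arg hz, hnz, z]) (by simp [θ, Complex.sin_arg, hnz, z])
  refine ⟨θ, hprim, fun t ht => ?_⟩
  obtain ⟨hcos, hsin⟩ := hunit t ht
  have hρ := (euclidNorm_pos (hne t ht)).ne'
  rw [← hcos, ← hsin]
  constructor <;> field_simp

theorem pi_le_integral_abs_turningRate {p : ℝ → ℝ × ℝ} {a b : ℝ} (hab : a < b)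
    (hp : ContDiff ℝ 1 p) (hne : ∀ t ∈ Icc a b, p t ≠ 0) (hper : p a = p b)
    (hx : 0 < ∫ t in a..b, (p t).1) (hy : ∫ t in a..b, (p t).2 = 0)
    {t₀ : ℝ} (ht₀ : t₀ ∈ Icc a b) (hx₀ : (p t₀).1 ≤ 0) :
    π ≤ ∫ t in a..b, |turningRate p t| := by
  obtain ⟨θ, hprim, hpolar⟩ := exists_angle hp hne
  have hρ : ∀ t ∈ Icc a b, 0 < euclidNorm (p t) := fun t ht => euclidNorm_pos (hne t ht)
  have hmem : ∀ {t}, t ∈ uIoo a b → t ∈ Icc a b := fun ht =>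
    Ioo_subset_Icc_self (by rwa [uIoo_of_le hab.le] at ht)
  have ha : a ∈ Icc a b := left_mem_Icc.2 hab.le
  have hb : b ∈ Icc a b := right_mem_Icc.2 hab.le
  obtain ⟨t₁, ht₁, hx₁⟩ := exists_eq_interval_average (f := fun t => (p t).1) hab.ne
    hp.continuous.fst.continuousOn
  obtain ⟨t₂, ht₂, hy₂⟩ := exists_eq_interval_average (f := fun t => (p t).2) hab.ne
    hp.continuous.snd.continuousOn
  rw [interval_average_eq, smul_eq_mul] at hx₁ hy₂
  rw [hy, mul_zero] at hy₂
  replace hx₁ : 0 < (p t₁).1 := hx₁ ▸ mul_pos (inv_pos.2 (sub_pos.2 hab)) hx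
  have hpa := hpolar a ha
  have hpb := hpolar b hb
  rw [hper] at hpa
  refine pi_le_integral_abs_of_cos_sin (intervalIntegrable_turningRate hp
    (by rwa [uIcc_of_le hab.le])) hprim ?_ ?_ ht₀ (hmem ht₁) (hmem ht₂) ?_ ?_ ?_
  · exact mul_left_cancel₀ (hρ b hb).ne' (hpb.1.symm.trans hpa.1)
  · exact mul_left_cancel₀ (hρ b hb).ne' (hpb.2.symm.trans hpa.2)
  · nlinarith [hρ t₀ ht₀, (hpolar t₀ ht₀).1]
  · nlinarith [hρ t₁ (hmem ht₁), (hpolar t₁ (hmem ht₁)).1]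
  · have := (hpolar t₂ (hmem ht₂)).2
    rw [hy₂, zero_eq_mul] at this
    exact this.resolve_left (hρ t₂ (hmem ht₂)).ne'

theorem abs_turningRate_deriv_le (γ : ℝ → ℝ × ℝ) (t : ℝ) :
    |turningRate (deriv γ) t| ≤ |curvature γ t| * ‖deriv γ t‖ := by
  rcases eq_or_ne (deriv γ t) 0 with h | h
  · simp [turningRate, h]
  have hr : 0 < ‖deriv γ t‖ := norm_pos_iff.2 h
  rw [turningRate, curvature, abs_div, abs_div, abs_pow, abs_pow, abs_norm,
    abs_of_pos (euclidNorm_pos h)]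
  calc _ ≤ |(deriv γ t).1 * (deriv (deriv γ) t).2 - (deriv γ t).2 * (deriv (deriv γ) t).1|
        / ‖deriv γ t‖ ^ 2 :=
        div_le_div_of_nonneg_left (abs_nonneg _) (by positivity)
          (pow_le_pow_left₀ hr.le (norm_le_euclidNorm _) 2)
    _ = _ := by field_simp

theorem contactPotential_mem_Icc {ψ : ℝ → ℝ} {α : ℝ} (hα : α ≤ 1) (q : ℝ × ℝ) :
    contactPotential ψ α q ∈ Icc α 1 := by
  unfold contactPotential
  split_ifs <;> simp [hα]

theorem measurable_contactPotential {ψ : ℝ → ℝ} (hψ : Continuous ψ) (α : ℝ) :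
    Measurable (contactPotential ψ α) :=
  Measurable.ite (isClosed_eq continuous_snd (hψ.comp continuous_fst)).measurableSet
    measurable_const measurable_const

namespace Admissible

variable {ψ : ℝ → ℝ} {γ : ℝ → ℝ × ℝ}

theorem contDiff_deriv (hγ : Admissible ψ γ) : ContDiff ℝ 1 (deriv γ) :=
  hγ.1.deriv'

theorem continuousOn_curvature (hγ : Admissible ψ γ) : ContinuousOn (curvature γ) (Icc 0 1) := by
  have h₁ := hγ.contDiff_deriv.continuous
  have h₂ := hγ.contDiff_deriv.continuous_deriv le_rfl
  exact ContinuousOn.div (by fun_prop) (by fun_prop)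
    fun t ht => pow_ne_zero 3 (norm_ne_zero_iff.2 (hγ.2.1 t ht))

theorem integrableOn_norm_deriv (hγ : Admissible ψ γ) :
    IntegrableOn (fun t => ‖deriv γ t‖) (Icc 0 1) :=
  hγ.contDiff_deriv.continuous.norm.integrableOn_Icc

theorem integrableOn_curvature_sq_mul_norm (hγ : Admissible ψ γ) :
    IntegrableOn (fun t => curvature γ t ^ 2 * ‖deriv γ t‖) (Icc 0 1) :=
  ((hγ.continuousOn_curvature.pow 2).mul
    hγ.contDiff_deriv.continuous.norm.continuousOn).integrableOn_Icc

theorem integral_fst_deriv (hγ : Admissible ψ γ) : ∫ t in (0 : ℝ)..1, (deriv γ t).1 = 1 := by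
  have ⟨hC2, _, _, hx₀, hx₁, _, _⟩ := hγ
  have hd := hC2.differentiable two_ne_zero
  rw [intervalIntegral.integral_eq_sub_of_hasDerivAt (fun t _ => (hd t).hasDerivAt.fst)
    (hγ.contDiff_deriv.continuous.fst.intervalIntegrable 0 1), hx₁, hx₀, sub_zero]

theorem integral_snd_deriv (hγ : Admissible ψ γ) : ∫ t in (0 : ℝ)..1, (deriv γ t).2 = 0 := by
  have ⟨hC2, _, _, _, _, hy, _⟩ := hγ
  have hd := hC2.differentiable two_ne_zero
  rw [intervalIntegral.integral_eq_sub_of_hasDerivAt (fun t _ => (hd t).hasDerivAt.snd)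
    (hγ.contDiff_deriv.continuous.snd.intervalIntegrable 0 1), hy, sub_self]

theorem one_le_length (hγ : Admissible ψ γ) : 1 ≤ Length γ := by
  rw [← hγ.integral_fst_deriv, intervalIntegral.integral_of_le zero_le_one,
    ← integral_Icc_eq_integral_Ioc, Length]
  exact setIntegral_mono_on hγ.contDiff_deriv.continuous.fst.integrableOn_Icc
    hγ.integrableOn_norm_deriv measurableSet_Icc
    fun t _ => (le_abs_self _).trans (le_max_left _ _)

theorem pi_le_integral_abs_curvature_mul_norm (hγ : Admissible ψ γ) {t₀ : ℝ}
    (ht₀ : t₀ ∈ Icc (0 : ℝ) 1) (hx₀ : (deriv γ t₀).1 ≤ 0) :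
    π ≤ ∫ t in Icc (0 : ℝ) 1, |curvature γ t| * ‖deriv γ t‖ := by
  have ⟨_, hreg, _, _, _, _, hper⟩ := hγ
  have hturn := pi_le_integral_abs_turningRate zero_lt_one hγ.contDiff_deriv hreg hper
    (by rw [hγ.integral_fst_deriv]; exact one_pos) hγ.integral_snd_deriv ht₀ hx₀
  rw [intervalIntegral.integral_of_le zero_le_one, ← integral_Icc_eq_integral_Ioc] at hturn
  refine hturn.trans (setIntegral_mono_on ?_ ?_ measurableSet_Icc
    fun t _ => abs_turningRate_deriv_le γ t)
  · exact ((continuousOn_turningRate hγ.contDiff_deriv).mono hreg).abs.integrableOn_Icc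
  · exact (hγ.continuousOn_curvature.abs.mul
      hγ.contDiff_deriv.continuous.norm.continuousOn).integrableOn_Icc


theorem pi_sq_div_length_le (hγ : Admissible ψ γ) {t₀ : ℝ} (ht₀ : t₀ ∈ Icc (0 : ℝ) 1)
    (hx₀ : (deriv γ t₀).1 ≤ 0) :
    π ^ 2 / Length γ ≤ ∫ t in Icc (0 : ℝ) 1, curvature γ t ^ 2 * ‖deriv γ t‖ := by
  have hr := hγ.contDiff_deriv.continuous.norm.continuousOn (s := Icc (0 : ℝ) 1)
  have hκ := hγ.continuousOn_curvature
  have hcs := sq_integral_abs_mul_le (μ := volume.restrict (Icc (0 : ℝ) 1))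
    (fun t => norm_nonneg (deriv γ t)) hγ.integrableOn_norm_deriv (hκ.abs.mul hr).integrableOn_Icc
    hγ.integrableOn_curvature_sq_mul_norm
  rw [div_le_iff₀ (one_pos.trans_le hγ.one_le_length), Length]
  exact (pow_le_pow_left₀ pi_pos.le (hγ.pi_le_integral_abs_curvature_mul_norm ht₀ hx₀) 2).trans hcs

theorem integrableOn_energy_integrand (hψ : Continuous ψ) {α : ℝ} (hα : α ≤ 1) (ε : ℝ)
    (hγ : Admissible ψ γ) :
    IntegrableOn (fun t => (ε ^ 2 * curvature γ t ^ 2 + contactPotential ψ α (γ t)) * ‖deriv γ t‖)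
      (Icc 0 1) := by
  have hΘ : IntegrableOn (fun t => contactPotential ψ α (γ t) * ‖deriv γ t‖) (Icc 0 1) :=
    hγ.integrableOn_norm_deriv.bdd_mul (c := max |α| 1)
      ((measurable_contactPotential hψ α).comp hγ.1.continuous.measurable).aestronglyMeasurable
      (ae_of_all _ fun t => by
        obtain ⟨hlow, hup⟩ := contactPotential_mem_Icc (ψ := ψ) hα (γ t)
        simpa using abs_le_max_abs_abs hlow hup)
  refine IntegrableOn.congr_fun ((hγ.integrableOn_curvature_sq_mul_norm.const_mul (ε ^ 2)).add hΘ)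
    (fun t _ => ?_) measurableSet_Icc
  simp only [Pi.add_apply]
  ring

theorem le_energy (hψ : Continuous ψ) {α : ℝ} (hα : α ≤ 1) (ε : ℝ) (hγ : Admissible ψ γ) :
    ε ^ 2 * (∫ t in Icc (0 : ℝ) 1, curvature γ t ^ 2 * ‖deriv γ t‖) + α * Length γ
      ≤ Energy ψ α ε γ := by
  have hr := hγ.integrableOn_norm_deriv
  have hκ := hγ.integrableOn_curvature_sq_mul_norm
  rw [Length, ← integral_const_mul, ← integral_const_mul,
    ← integral_add (hκ.const_mul _) (hr.const_mul _)]
  refine setIntegral_mono_on ((hκ.const_mul _).add (hr.const_mul _))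
    (hγ.integrableOn_energy_integrand hψ hα ε) measurableSet_Icc fun t _ => ?_
  have := (contactPotential_mem_Icc (ψ := ψ) hα (γ t)).1
  nlinarith [norm_nonneg (deriv γ t)]

theorem one_lt_energy (hψ : Continuous ψ) {α ε : ℝ} (hα1 : α < 1)
    (hcond : (π ^ 2 * ε ^ 2 + 1) * α ≥ 1) (hγ : Admissible ψ γ) {t₀ : ℝ}
    (ht₀ : t₀ ∈ Icc (0 : ℝ) 1) (hx₀ : (deriv γ t₀).1 ≤ 0) : 1 < Energy ψ α ε γ := by
  calc (1 : ℝ) < π ^ 2 * ε ^ 2 / Length γ + α * Length γ :=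
        one_lt_div_add_mul (by positivity) hα1 hcond hγ.one_le_length
    _ = ε ^ 2 * (π ^ 2 / Length γ) + α * Length γ := by ring
    _ ≤ ε ^ 2 * (∫ t in Icc (0 : ℝ) 1, curvature γ t ^ 2 * ‖deriv γ t‖) + α * Length γ := by
        gcongr; exact hγ.pi_sq_div_length_le ht₀ hx₀
    _ ≤ Energy ψ α ε γ := hγ.le_energy hψ hα1.le ε

end Admissible

theorem exists_admissible_energy_eq_one {ψ : ℝ → ℝ} (hψ : Continuous ψ) (α ε : ℝ) :
    ∃ γ : ℝ → ℝ × ℝ, Admissible ψ γ ∧ Energy ψ α ε γ = 1 := by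
  obtain ⟨m, -, hm⟩ := isCompact_Icc.exists_isMaxOn (nonempty_Icc.2 zero_le_one) hψ.continuousOn
  set c := ψ m + 1
  have habove : ∀ t ∈ Icc (0 : ℝ) 1, ψ t < c := fun t ht => (hm ht).trans_lt (lt_add_one _)
  have hderiv : deriv (fun t : ℝ => (t, c)) = fun _ => (1, 0) :=
    funext fun t => ((hasDerivAt_id t).prodMk (hasDerivAt_const t c)).deriv
  refine ⟨fun t => (t, c), ⟨contDiff_id.prodMk contDiff_const, by simp [hderiv],
    fun t ht => (habove t ht).le, rfl, rfl, rfl, by rw [hderiv]⟩, ?_⟩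
  rw [Energy, setIntegral_congr_fun measurableSet_Icc (g := fun _ => 1) fun t ht => ?_]
  · simp
  · simp [curvature, hderiv, contactPotential, (habove t ht).ne']

theorem graph_representation_of_minimizers_general (ψ : ℝ → ℝ) (hψ : Continuous ψ)
    (α ε : ℝ) (hα1 : α < 1)
    (hcond : (π ^ 2 * ε ^ 2 + 1) * α ≥ 1)
    (γ : ℝ → ℝ × ℝ) (hγ : Admissible ψ γ)
    (hmin : ∀ γ' : ℝ → ℝ × ℝ, Admissible ψ γ' → Energy ψ α ε γ ≤ Energy ψ α ε γ') :
    IsGraph γ := by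
  intro t ht
  by_contra! hx
  obtain ⟨γ₀, hγ₀, hE₀⟩ := exists_admissible_energy_eq_one hψ α ε
  linarith [hmin γ₀ hγ₀, hγ.one_lt_energy hψ hα1 hcond ht hx]

/-- If (π²ε² + 1)α ≥ 1 then, independently of ψ, any global minimizer of E is a
graph curve. -/
theorem graph_representation_of_minimizers (ψ : ℝ → ℝ) (hψ : Continuous ψ)
    (hper : Function.Periodic ψ 1) (α ε : ℝ) (hα : 0 < α) (hα1 : α < 1) (hε : 0 < ε)
    (hcond : (π ^ 2 * ε ^ 2 + 1) * α ≥ 1)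
    (γ : ℝ → ℝ × ℝ) (hγ : Admissible ψ γ)
    (hmin : ∀ γ' : ℝ → ℝ × ℝ, Admissible ψ γ' → Energy ψ α ε γ ≤ Energy ψ α ε γ') :
    IsGraph γ :=
  graph_representation_of_minimizers_general ψ hψ α ε hα1 hcond γ hγ hmin

end
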